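/- arXiv:2507.16603 — 2 statements merged into one kernel-verified Lean document; each statement's English description precedes it below -/
import Mathlib

section
/- Let Y¹ and Y⁰ be independent random variables, each exponentially distributed with rate 1, let τ¹ be the honest random time on [s,t] associated with the intensity λ1 and driven by Y¹, and let τ⁰ be the honest random time on [s,t] associated with the intensity λ0 and driven by Y⁰. Then E[exp(-∫_{τ¹}^t λ0(u) du)] = P(τ⁰ ≤ τ¹). -/
/-
For `y ≥ 0` the set `{r ∈ [s,t] | ∫_r^t λ₀ ≤ y}` is a closed final segment of `[s,t]`, so for
`x ∈ [s,t]` we have `τ⁰ ≤ x ↔ ∫_x^t λ₀ ≤ Y⁰`. Hence `{τ⁰ ≤ τ¹} = {∫_{τ¹}^t λ₀ ≤ Y⁰}` almost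
surely, and since `Y⁰` is `Exp(1)` and independent of `τ¹`, integrating its tail
`P(Y⁰ ≥ a) = exp(-a)` against the law of `τ¹` gives `E[exp(-∫_{τ¹}^t λ₀)]`.
-/

open MeasureTheory ProbabilityTheory Real

/-- The honest random time on `[s,t]` associated with the intensity `lam`,
driven by the value `y`: `max (s, inf {r ∈ [s,t] : ∫_r^t lam ≤ y})`. -/
noncomputable def honestTime (s t : ℝ) (lam : ℝ → ℝ) (y : ℝ) : ℝ :=
  max s (sInf {r | r ∈ Set.Icc s t ∧ ∫ u in r..t, lam u ≤ y})

open Set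

lemma ae_nonneg_expMeasure (r : ℝ) : ∀ᵐ x ∂expMeasure r, 0 ≤ x := by
  simp only [ae_iff, not_le]
  change expMeasure r (Iio 0) = 0
  rw [expMeasure, gammaMeasure, withDensity_apply _ measurableSet_Iio]
  exact lintegral_gammaPDF_of_nonpos le_rfl

lemma ae_nonneg_of_map_eq_expMeasure {Ω : Type*} [MeasurableSpace Ω] {P : Measure Ω} {r : ℝ}
    {Y : Ω → ℝ} (hY : Measurable Y) (hlaw : P.map Y = expMeasure r) : 0 ≤ᵐ[P] Y :=
  (ae_map_iff hY.aemeasurable measurableSet_Ici).mp (hlaw ▸ ae_nonneg_expMeasure r)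

lemma expMeasure_Ici {r a : ℝ} (hr : 0 < r) (ha : 0 ≤ a) :
    expMeasure r (Ici a) = ENNReal.ofReal (exp (-(r * a))) := by
  have := isProbabilityMeasure_expMeasure hr
  have : NullSingletonClass (expMeasure r) := by unfold expMeasure gammaMeasure; infer_instance
  rw [← measure_congr Ioi_ae_eq_Ici, ← compl_Iic, prob_compl_eq_one_sub measurableSet_Iic,
    ← ofReal_cdf, cdf_expMeasure_eq hr, if_pos ha, ← ENNReal.ofReal_one,
    ← ENNReal.ofReal_sub _ (sub_nonneg.2 (exp_le_one_iff.2 (neg_nonpos.2 (mul_nonneg hr.le ha))))]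
  ring_nf

theorem integral_exp_neg_mul_eq_measure_le {Ω : Type*} [MeasurableSpace Ω] {P : Measure Ω}
    [IsProbabilityMeasure P] {r : ℝ} (hr : 0 < r) {X Y : Ω → ℝ} (hX : Measurable X)
    (hY : Measurable Y) (hX_nonneg : 0 ≤ᵐ[P] X) (hY_law : P.map Y = expMeasure r)
    (hXY : IndepFun X Y P) :
    ∫ ω, exp (-(r * X ω)) ∂P = (P {ω | X ω ≤ Y ω}).toReal := by
  have := isProbabilityMeasure_expMeasure hr
  have hle : MeasurableSet {p : ℝ × ℝ | p.1 ≤ p.2} :=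
    measurableSet_le measurable_fst measurable_snd
  have h_joint : P.map (fun ω ↦ (X ω, Y ω)) = (P.map X).prod (expMeasure r) := by
    rw [← hY_law]
    exact (indepFun_iff_map_prod_eq_prod_map_map hX.aemeasurable hY.aemeasurable).mp hXY
  have h_map_nonneg : ∀ᵐ x ∂P.map X, 0 ≤ x :=
    (ae_map_iff hX.aemeasurable measurableSet_Ici).mpr hX_nonneg
  have h_prob : P {ω | X ω ≤ Y ω} = ∫⁻ ω, ENNReal.ofReal (exp (-(r * X ω))) ∂P :=
    calc P {ω | X ω ≤ Y ω} = P.map (fun ω ↦ (X ω, Y ω)) {p | p.1 ≤ p.2} :=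
          (Measure.map_apply (hX.prodMk hY) hle).symm
      _ = ∫⁻ x, expMeasure r (Ici x) ∂P.map X := by
          rw [h_joint, Measure.prod_apply hle]; rfl
      _ = ∫⁻ x, ENNReal.ofReal (exp (-(r * x))) ∂P.map X :=
          lintegral_congr_ae (h_map_nonneg.mono fun x hx ↦ expMeasure_Ici hr hx)
      _ = ∫⁻ ω, ENNReal.ofReal (exp (-(r * X ω))) ∂P :=
          lintegral_map (by fun_prop) hX
  rw [h_prob, integral_eq_lintegral_of_nonneg_ae (ae_of_all _ fun _ ↦ (exp_pos _).le)
    (by fun_prop)]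

section HonestTime

variable {s t : ℝ} {lam : ℝ → ℝ} {x y : ℝ}

def honestSet (s t : ℝ) (lam : ℝ → ℝ) (y : ℝ) : Set ℝ :=
  {r | r ∈ Icc s t ∧ ∫ u in r..t, lam u ≤ y}

lemma right_mem_honestSet (hst : s ≤ t) (hy : 0 ≤ y) : t ∈ honestSet s t lam y :=
  ⟨right_mem_Icc.2 hst, by simpa using hy⟩

lemma honestSet_mono {y y' : ℝ} (hyy' : y ≤ y') : honestSet s t lam y ⊆ honestSet s t lam y' :=
  fun _ hr ↦ ⟨hr.1, hr.2.trans hyy'⟩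

lemma bddBelow_honestSet : BddBelow (honestSet s t lam y) := ⟨s, fun _ hr ↦ hr.1.1⟩

lemma honestTime_eq_sInf (hst : s ≤ t) (hy : 0 ≤ y) :
    honestTime s t lam y = sInf (honestSet s t lam y) :=
  max_eq_right (le_csInf ⟨t, right_mem_honestSet hst hy⟩ fun _ hr ↦ hr.1.1)

lemma honestTime_mem_Icc (hst : s ≤ t) (hy : 0 ≤ y) : honestTime s t lam y ∈ Icc s t := by
  rw [honestTime_eq_sInf hst hy]
  exact ⟨le_csInf ⟨t, right_mem_honestSet hst hy⟩ fun _ hr ↦ hr.1.1,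
    csInf_le bddBelow_honestSet (right_mem_honestSet hst hy)⟩

lemma antitone_honestTime_max_zero (hst : s ≤ t) :
    Antitone fun y ↦ honestTime s t lam (max y 0) := fun _ _ hab ↦
  max_le_max le_rfl <| csInf_le_csInf bddBelow_honestSet
    ⟨t, right_mem_honestSet hst (le_max_right _ _)⟩ (honestSet_mono (max_le_max_right 0 hab))

lemma continuous_integral_left (hlam : Continuous lam) :
    Continuous fun r ↦ ∫ u in r..t, lam u := by
  simp only [intervalIntegral.integral_symm t]
  exact (intervalIntegral.continuous_primitive (fun _ _ ↦ hlam.intervalIntegrable _ _) t).neg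

lemma isClosed_honestSet (hlam : Continuous lam) : IsClosed (honestSet s t lam y) :=
  isClosed_Icc.inter (isClosed_le (continuous_integral_left hlam) continuous_const)

lemma honestTime_mem_honestSet (hlam : Continuous lam) (hst : s ≤ t) (hy : 0 ≤ y) :
    honestTime s t lam y ∈ honestSet s t lam y := by
  rw [honestTime_eq_sInf hst hy]
  exact (isClosed_honestSet hlam).csInf_mem ⟨t, right_mem_honestSet hst hy⟩ bddBelow_honestSet

lemma integral_left_antitoneOn (hlam : Continuous lam) (hnn : ∀ u ∈ Icc s t, 0 ≤ lam u) :
    AntitoneOn (fun r ↦ ∫ u in r..t, lam u) (Icc s t) := fun _ ha _ hb hab ↦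
  intervalIntegral.integral_mono_interval hab hb.2 le_rfl
    ((ae_restrict_iff' measurableSet_Ioc).2 <|
      ae_of_all _ fun u hu ↦ hnn u ⟨ha.1.trans hu.1.le, hu.2⟩)
    (hlam.intervalIntegrable _ _)

lemma honestTime_le_iff (hlam : Continuous lam) (hnn : ∀ u ∈ Icc s t, 0 ≤ lam u)
    (hst : s ≤ t) (hy : 0 ≤ y) (hx : x ∈ Icc s t) :
    honestTime s t lam y ≤ x ↔ ∫ u in x..t, lam u ≤ y := by
  refine ⟨fun h ↦ ?_, fun h ↦ max_le hx.1 (csInf_le bddBelow_honestSet ⟨hx, h⟩)⟩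
  have hτ := honestTime_mem_honestSet hlam hst hy
  exact (integral_left_antitoneOn hlam hnn hτ.1 hx h).trans hτ.2

end HonestTime

theorem expectation_eq_prob_le_general
    {Ω : Type*} [MeasurableSpace Ω] (P : Measure Ω) [IsProbabilityMeasure P]
    (s t : ℝ) (hst : s < t)
    (lam0 lam1 : ℝ → ℝ) (hlam0 : Continuous lam0)
    (hlam0_nonneg : ∀ u ∈ Set.Icc s t, 0 ≤ lam0 u)
    (Y1 Y0 : Ω → ℝ) (hY1 : Measurable Y1) (hY0 : Measurable Y0)
    (hY1law : P.map Y1 = expMeasure 1) (hY0law : P.map Y0 = expMeasure 1)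
    (hindep : IndepFun Y1 Y0 P) :
    (∫ ω, Real.exp (-(∫ u in (honestTime s t lam1 (Y1 ω))..t, lam0 u)) ∂P)
      = (P {ω | honestTime s t lam0 (Y0 ω) ≤ honestTime s t lam1 (Y1 ω)}).toReal := by
  -- Clamping `Y1` at `0` changes nothing a.s. and makes `τ¹` a measurable `[s, t]`-valued time.
  set G : ℝ → ℝ := fun y ↦ ∫ u in honestTime s t lam1 (max y 0)..t, lam0 u
  have hτ1_mem (y : ℝ) : honestTime s t lam1 (max y 0) ∈ Icc s t :=
    honestTime_mem_Icc hst.le (le_max_right y 0)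
  have hG : Measurable G := (continuous_integral_left hlam0).measurable.comp
    (antitone_honestTime_max_zero hst.le).measurable
  have hG_nonneg (y : ℝ) : 0 ≤ G y :=
    intervalIntegral.integral_nonneg (hτ1_mem y).2 fun u hu ↦
      hlam0_nonneg u ⟨(hτ1_mem y).1.trans hu.1, hu.2⟩
  have hclamp : ∀ᵐ ω ∂P, max (Y1 ω) 0 = Y1 ω :=
    (ae_nonneg_of_map_eq_expMeasure hY1 hY1law).mono fun _ h ↦ max_eq_left h
  calc (∫ ω, exp (-(∫ u in (honestTime s t lam1 (Y1 ω))..t, lam0 u)) ∂P)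
      = ∫ ω, exp (-(1 * G (Y1 ω))) ∂P :=
        integral_congr_ae (hclamp.mono fun ω h ↦ by simp only [G, h, one_mul])
    _ = (P {ω | G (Y1 ω) ≤ Y0 ω}).toReal :=
        integral_exp_neg_mul_eq_measure_le one_pos (hG.comp hY1) hY0
          (ae_of_all _ fun _ ↦ hG_nonneg _) hY0law (hindep.comp hG measurable_id)
    _ = (P {ω | honestTime s t lam0 (Y0 ω) ≤ honestTime s t lam1 (Y1 ω)}).toReal := by
        refine congrArg ENNReal.toReal (measure_congr (Filter.eventuallyEq_set.mpr ?_))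
        filter_upwards [hclamp, ae_nonneg_of_map_eq_expMeasure hY0 hY0law] with ω h1 h0
        exact (honestTime_le_iff hlam0 hlam0_nonneg hst.le h0 (hτ1_mem _)).symm.trans
          (by rw [h1])

/-- With `τ¹`, `τ⁰` the honest times on `[s,t]` associated with `λ₁`, `λ₀` and driven
by independent `Exp(1)` random variables `Y¹`, `Y⁰`,
`E[exp (-∫_{τ¹}^t λ₀(u) du)] = P(τ⁰ ≤ τ¹)`. -/
theorem expectation_eq_prob_le
    {Ω : Type*} [MeasurableSpace Ω] (P : Measure Ω) [IsProbabilityMeasure P]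
    (s t : ℝ) (hs : 0 ≤ s) (hst : s < t)
    (lam0 lam1 : ℝ → ℝ) (hlam0 : Continuous lam0) (hlam1 : Continuous lam1)
    (hlam0_nonneg : ∀ u ∈ Set.Icc s t, 0 ≤ lam0 u)
    (hlam1_nonneg : ∀ u ∈ Set.Icc s t, 0 ≤ lam1 u)
    (Y1 Y0 : Ω → ℝ) (hY1 : Measurable Y1) (hY0 : Measurable Y0)
    (hY1law : P.map Y1 = expMeasure 1) (hY0law : P.map Y0 = expMeasure 1)
    (hindep : IndepFun Y1 Y0 P) :
    (∫ ω, Real.exp (-(∫ u in (honestTime s t lam1 (Y1 ω))..t, lam0 u)) ∂P)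
      = (P {ω | honestTime s t lam0 (Y0 ω) ≤ honestTime s t lam1 (Y1 ω)}).toReal :=
  expectation_eq_prob_le_general P s t hst lam0 lam1 hlam0 hlam0_nonneg Y1 Y0 hY1 hY0 hY1law hY0law
    hindep
end

section
/- (Mixing in total variation without stationarity.) Suppose λ0, λ1 : ℝ → ℝ are continuous and nonnegative on [s,∞) and ∫_s^t (λ0(u)+λ1(u)) du → ∞ as t → ∞. Then the rows of the transition matrix merge in total variation: |P11(s,t) - P01(s,t)| + |P10(s,t) - P00(s,t)| → 0 as t → ∞. -/
/-!
Write `Λ(v,t) = ∫_v^t (λ₀+λ₁)`. Since `∂_v exp(-Λ(v,t)) = exp(-Λ(v,t)) (λ₀+λ₁)(v)`, the fundamental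
theorem of calculus gives `P₁₀(s,t) + P₀₁(s,t) = 1 - exp(-Λ(s,t))`. Hence both differences of rows
equal `± exp(-Λ(s,t))`, the total variation distance is `2 exp(-Λ(s,t))`, and this tends to `0`
because `Λ(s,t) → ∞`.
-/

open MeasureTheory Real Filter

section ExpNegIntegral

variable {lam : ℝ → ℝ}

theorem hasDerivAt_exp_neg_integral (hlam : Continuous lam) (t v : ℝ) :
    HasDerivAt (fun v => exp (-∫ r in v..t, lam r)) (exp (-∫ r in v..t, lam r) * lam v) v := by
  have hint : HasDerivAt (fun v => ∫ r in v..t, lam r) (-lam v) v :=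
    intervalIntegral.integral_hasDerivAt_left (hlam.intervalIntegrable v t)
      (hlam.stronglyMeasurableAtFilter volume _) hlam.continuousAt
  simpa using hint.neg.exp

theorem continuous_exp_neg_integral (hlam : Continuous lam) (t : ℝ) :
    Continuous fun v => exp (-∫ r in v..t, lam r) :=
  continuous_iff_continuousAt.2 fun v => (hasDerivAt_exp_neg_integral hlam t v).continuousAt

theorem integral_exp_neg_integral_mul (hlam : Continuous lam) (s t : ℝ) :
    ∫ v in s..t, exp (-∫ r in v..t, lam r) * lam v = 1 - exp (-∫ r in s..t, lam r) := by
  rw [intervalIntegral.integral_eq_sub_of_hasDerivAt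
    (fun v _ => hasDerivAt_exp_neg_integral hlam t v)
    (((continuous_exp_neg_integral hlam t).mul hlam).intervalIntegrable s t)]
  simp

end ExpNegIntegral

theorem mixing_total_variation_general
    (s : ℝ)
    (lam0 lam1 : ℝ → ℝ) (hlam0 : Continuous lam0) (hlam1 : Continuous lam1)
    (hdiv : Tendsto (fun t => ∫ u in s..t, (lam0 u + lam1 u)) atTop atTop) :
    Tendsto (fun t =>
        |(1 - ∫ v in s..t, Real.exp (-(∫ r in v..t, (lam0 r + lam1 r))) * lam1 v)
            - (∫ v in s..t, Real.exp (-(∫ r in v..t, (lam0 r + lam1 r))) * lam0 v)|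
        + |(∫ v in s..t, Real.exp (-(∫ r in v..t, (lam0 r + lam1 r))) * lam1 v)
            - (1 - ∫ v in s..t, Real.exp (-(∫ r in v..t, (lam0 r + lam1 r))) * lam0 v)|)
      atTop (nhds 0) := by
  have hlam : Continuous fun u => lam0 u + lam1 u := hlam0.add hlam1
  have hrows : ∀ t : ℝ,
      (∫ v in s..t, exp (-∫ r in v..t, (lam0 r + lam1 r)) * lam1 v)
        + (∫ v in s..t, exp (-∫ r in v..t, (lam0 r + lam1 r)) * lam0 v)
        = 1 - exp (-∫ r in s..t, (lam0 r + lam1 r)) := fun t => by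
    have hexp := continuous_exp_neg_integral hlam t
    rw [← integral_exp_neg_integral_mul hlam, ← intervalIntegral.integral_add
      (by exact (hexp.mul hlam1).intervalIntegrable s t)
      (by exact (hexp.mul hlam0).intervalIntegrable s t)]
    simp only [mul_add, add_comm]
  have htv : ∀ t : ℝ,
      |(1 - ∫ v in s..t, exp (-∫ r in v..t, (lam0 r + lam1 r)) * lam1 v)
          - (∫ v in s..t, exp (-∫ r in v..t, (lam0 r + lam1 r)) * lam0 v)|
        + |(∫ v in s..t, exp (-∫ r in v..t, (lam0 r + lam1 r)) * lam1 v)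
          - (1 - ∫ v in s..t, exp (-∫ r in v..t, (lam0 r + lam1 r)) * lam0 v)|
        = 2 * exp (-∫ r in s..t, (lam0 r + lam1 r)) := fun t => by
    rw [sub_sub, sub_sub_eq_add_sub, hrows t, sub_sub_cancel, sub_sub_cancel_left, abs_neg,
      abs_of_pos (exp_pos _), two_mul]
  simp only [htv]
  simpa using (tendsto_exp_atBot.comp (tendsto_neg_atBot_iff.2 hdiv)).const_mul 2

/-- Mixing in total variation without stationarity: if `λ₀, λ₁` are continuous,
nonnegative on `[s,∞)`, and `∫_s^t (λ₀+λ₁)(u) du → ∞` as `t → ∞`, then the rows of the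
transition matrix merge in total variation:
`|P₁₁(s,t) - P₀₁(s,t)| + |P₁₀(s,t) - P₀₀(s,t)| → 0` as `t → ∞`, where
`P₀₁(s,t) = ∫_s^t exp (-∫_v^t (λ₀+λ₁)(r) dr) λ₀(v) dv`, `P₀₀ = 1 - P₀₁`,
`P₁₀(s,t) = ∫_s^t exp (-∫_v^t (λ₀+λ₁)(r) dr) λ₁(v) dv`, `P₁₁ = 1 - P₁₀`. -/
theorem mixing_total_variation
    (s : ℝ) (hs : 0 ≤ s)
    (lam0 lam1 : ℝ → ℝ) (hlam0 : Continuous lam0) (hlam1 : Continuous lam1)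
    (hlam0_nonneg : ∀ u, s ≤ u → 0 ≤ lam0 u)
    (hlam1_nonneg : ∀ u, s ≤ u → 0 ≤ lam1 u)
    (hdiv : Tendsto (fun t => ∫ u in s..t, (lam0 u + lam1 u)) atTop atTop) :
    Tendsto (fun t =>
        |(1 - ∫ v in s..t, Real.exp (-(∫ r in v..t, (lam0 r + lam1 r))) * lam1 v)
            - (∫ v in s..t, Real.exp (-(∫ r in v..t, (lam0 r + lam1 r))) * lam0 v)|
        + |(∫ v in s..t, Real.exp (-(∫ r in v..t, (lam0 r + lam1 r))) * lam1 v)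
            - (1 - ∫ v in s..t, Real.exp (-(∫ r in v..t, (lam0 r + lam1 r))) * lam0 v)|)
      atTop (nhds 0) :=
  mixing_total_variation_general s lam0 lam1 hlam0 hlam1 hdiv
end
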